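/- For every natural number L, the product (-q;q²)_L = ∏_{k=1}^{L} (1+q^(2k-1)) equals the alternating sum over all integers j of (-1)^j q^(2j²) times the Gaussian binomial coefficient (2L choose L-2j) in base q, and this also equals the alternating sum over all integers j of (-1)^j q^(2j²) times the Gaussian binomial coefficient (2L+1 choose L-2j) in base q. -/

import Mathlib

/-!
Write `A(n, m)` for `∑ⱼ (-1)^j q^(2j²) [n, m - 2j]`. Each of the two `q`-Pascal rules splits a
sum over `[n + 1, ·]` into two sums over `[n, ·]`, at the cost of a linear term in the exponent.
The sums `∑ⱼ (-1)^j q^(2j² + 2j) [2m + 2, m - 2j]` that appear vanish, because the symmetry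
`[n, k] = [n, n - k]` makes their summand odd under `j ↦ -j - 1`. This gives
`A(2L + 1, L) = A(2L, L)` and, together with the reflection `j ↦ -j`,
`A(2L + 2, L + 1) = (1 + q^(2L+1)) A(2L, L)`; induct from `A(0, 0) = 1`.
-/

open LaurentPolynomial Finset

noncomputable section

/-- Gaussian binomial coefficient with natural indices, in base `x`, defined by the
`q`-Pascal recurrence `[n+1, k+1] = [n, k] + x^(k+1) * [n, k+1]`.  It vanishes for `k > n`. -/
def gaussAux (x : LaurentPolynomial ℤ) : ℕ → ℕ → LaurentPolynomial ℤ
  | _, 0 => 1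
  | 0, _ + 1 => 0
  | n + 1, k + 1 => gaussAux x n k + x ^ (k + 1) * gaussAux x n (k + 1)

/-- The Gaussian binomial coefficient `[n choose k]` in base `x`, for integer indices:
it is zero when `n < 0` or `k < 0` (and, by `gaussAux`, also when `k > n`). -/
def qbin (x : LaurentPolynomial ℤ) (n k : ℤ) : LaurentPolynomial ℤ :=
  if 0 ≤ n ∧ 0 ≤ k then gaussAux x n.toNat k.toNat else 0

/-- `(-1)^j` for an integer `j`, as a Laurent polynomial. -/
def m1 (j : ℤ) : LaurentPolynomial ℤ := ((((-1 : ℤˣ) ^ j : ℤˣ) : ℤ) : LaurentPolynomial ℤ)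

variable {x : LaurentPolynomial ℤ}

lemma gaussAux_zero_right (n : ℕ) : gaussAux x n 0 = 1 := by cases n <;> rfl

lemma gaussAux_succ_succ (n k : ℕ) :
    gaussAux x (n + 1) (k + 1) = gaussAux x n k + x ^ (k + 1) * gaussAux x n (k + 1) := rfl

lemma gaussAux_eq_zero_of_lt {n k : ℕ} (h : n < k) : gaussAux x n k = 0 := by
  induction n generalizing k with
  | zero => obtain ⟨k, rfl⟩ := Nat.exists_eq_succ_of_ne_zero h.ne'; rfl
  | succ n ih =>
    cases k with
    | zero => omega
    | succ k => rw [gaussAux_succ_succ, ih (by omega), ih (by omega), mul_zero, add_zero]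

lemma gaussAux_self (n : ℕ) : gaussAux x n n = 1 := by
  induction n with
  | zero => rfl
  | succ n ih =>
    rw [gaussAux_succ_succ, ih, gaussAux_eq_zero_of_lt n.lt_succ_self, mul_zero, add_zero]

lemma gaussAux_succ_succ' (n k : ℕ) :
    gaussAux x (n + 1) (k + 1) = x ^ (n - k) * gaussAux x n k + gaussAux x n (k + 1) := by
  induction n generalizing k with
  | zero =>
    cases k with
    | zero => simp [gaussAux_succ_succ, gaussAux_zero_right, gaussAux_eq_zero_of_lt]
    | succ k => simp [gaussAux_eq_zero_of_lt]
  | succ n ih =>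
    cases k with
    | zero =>
      conv_lhs => rw [gaussAux_succ_succ, ih]
      rw [gaussAux_succ_succ n 0]
      simp only [gaussAux_zero_right, Nat.sub_zero]
      ring
    | succ k =>
      conv_lhs => rw [gaussAux_succ_succ, ih, ih]
      rw [gaussAux_succ_succ n k, gaussAux_succ_succ n (k + 1), Nat.add_sub_add_right]
      rcases Nat.lt_or_ge k n with hk | hk
      · have hpow : x ^ (k + 1 + 1) * x ^ (n - (k + 1)) = x ^ (n - k) * x ^ (k + 1) := by
          rw [← pow_add, ← pow_add]; congr 1; omega
        linear_combination gaussAux x n (k + 1) * hpow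
      · rw [gaussAux_eq_zero_of_lt (by omega : n < k + 1),
          gaussAux_eq_zero_of_lt (by omega : n < k + 1 + 1)]
        ring

lemma gaussAux_symm {n k : ℕ} (h : k ≤ n) : gaussAux x n k = gaussAux x n (n - k) := by
  induction n generalizing k with
  | zero => rw [Nat.le_zero.mp h]
  | succ n ih =>
    cases k with
    | zero => rw [gaussAux_zero_right, Nat.sub_zero, gaussAux_self]
    | succ k =>
      rcases Nat.lt_or_ge k n with hk | hk
      · rw [gaussAux_succ_succ', ih hk.le, ih hk, show n + 1 - (k + 1) = n - (k + 1) + 1 by omega,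
          gaussAux_succ_succ, show n - (k + 1) + 1 = n - k by omega]
        ring
      · obtain rfl : k = n := by omega
        rw [Nat.sub_self, gaussAux_self, gaussAux_zero_right]

@[simp, norm_cast]
lemma qbin_natCast (n k : ℕ) : qbin x n k = gaussAux x n k := by
  simp [qbin]

lemma qbin_eq_zero_of_neg {n k : ℤ} (hk : k < 0) : qbin x n k = 0 :=
  if_neg fun h => hk.not_ge h.2

lemma qbin_eq_zero_of_lt {n k : ℤ} (h : n < k) : qbin x n k = 0 := by
  unfold qbin
  split_ifs with hnk
  · exact gaussAux_eq_zero_of_lt (by omega)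
  · rfl

lemma qbin_zero_right {n : ℤ} (hn : 0 ≤ n) : qbin x n 0 = 1 := by
  lift n to ℕ using hn
  exact_mod_cast gaussAux_zero_right n

lemma qbin_symm (n k : ℤ) : qbin x n k = qbin x n (n - k) := by
  rcases lt_or_ge k 0 with hk | hk
  · rw [qbin_eq_zero_of_neg hk, qbin_eq_zero_of_lt (by omega)]
  rcases lt_or_ge n k with hnk | hnk
  · rw [qbin_eq_zero_of_lt hnk, qbin_eq_zero_of_neg (by omega)]
  lift k to ℕ using hk
  lift n to ℕ using by omega
  rw [← Nat.cast_sub (by omega)]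
  exact_mod_cast gaussAux_symm (by omega)

lemma T_natCast_add_one (k : ℕ) :
    (T ((k : ℤ) + 1) : LaurentPolynomial ℤ) = T 1 ^ (k + 1) := by
  rw [T_pow]; push_cast; ring_nf

lemma qbin_succ {n : ℤ} (hn : 0 ≤ n) (k : ℤ) :
    qbin (T 1) (n + 1) k = qbin (T 1) n (k - 1) + T k * qbin (T 1) n k := by
  rcases lt_trichotomy k 0 with hk | rfl | hk
  · simp [qbin_eq_zero_of_neg, hk, (by omega : k - 1 < 0)]
  · rw [qbin_zero_right (by omega), qbin_eq_zero_of_neg (by omega), T_zero, one_mul,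
      qbin_zero_right hn, zero_add]
  lift n to ℕ using hn
  obtain ⟨k, rfl⟩ : ∃ k' : ℕ, k = k' + 1 := ⟨(k - 1).toNat, by omega⟩
  rw [add_sub_cancel_right, T_natCast_add_one]
  exact_mod_cast gaussAux_succ_succ n k

lemma qbin_succ' {n : ℤ} (hn : 0 ≤ n) (k : ℤ) :
    qbin (T 1) (n + 1) k = T (n + 1 - k) * qbin (T 1) n (k - 1) + qbin (T 1) n k := by
  rw [qbin_symm, qbin_succ hn, qbin_symm n (n + 1 - k - 1), qbin_symm n (n + 1 - k),
    show n - (n + 1 - k - 1) = k by ring, show n - (n + 1 - k) = k - 1 by ring]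
  ring

lemma m1_neg (j : ℤ) : m1 (-j) = m1 j := by simp [m1, zpow_neg]

lemma m1_neg_sub_one (j : ℤ) : m1 (-j - 1) = -m1 j := by simp [m1, zpow_sub, zpow_neg]

instance : CharZero (LaurentPolynomial ℤ) :=
  charZero_of_injective_ringHom (Polynomial.toLaurent_injective (R := ℤ))

theorem finsum_eq_zero_of_comp_equiv_eq_neg {α R : Type*} [Ring R] [NoZeroDivisors R]
    [CharZero R] (e : α ≃ α) {f : α → R} (h : ∀ a, f (e a) = -f a) : ∑ᶠ a, f a = 0 :=
  CharZero.eq_neg_self_iff.mp <| calc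
    ∑ᶠ a, f a = ∑ᶠ a, f (e a) := (finsum_comp_equiv e).symm
    _ = ∑ᶠ a, -f a := finsum_congr h
    _ = -∑ᶠ a, f a := finsum_neg_distrib f

lemma finite_support_mul_qbin (g : ℤ → LaurentPolynomial ℤ) (n m : ℤ) :
    (Function.support fun j => g j * qbin x n (m - 2 * j)).Finite := by
  refine (Set.finite_Icc ((m - n) / 2) (m / 2)).subset fun j hj => ?_
  contrapose! hj
  simp only [Set.mem_Icc, not_and_or, not_le] at hj
  rw [Function.notMem_support]
  rcases hj with hj | hj
  · rw [qbin_eq_zero_of_lt (by omega), mul_zero]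
  · rw [qbin_eq_zero_of_neg (by omega), mul_zero]

/-- The linear term `c * j` in the exponent absorbs the shifts produced by the `q`-Pascal rules. -/
def qbinThetaSum (c n m : ℤ) : LaurentPolynomial ℤ :=
  ∑ᶠ j : ℤ, m1 j * T (2 * j ^ 2 + c * j) * qbin (T 1) n (m - 2 * j)

lemma T_mul_T_eq_T_mul_T (a b c d : ℤ) (h : a + b = c + d) :
    (T a * T b : LaurentPolynomial ℤ) = T c * T d := by
  rw [← T_add, ← T_add, h]

lemma qbinThetaSum_succ {n : ℤ} (hn : 0 ≤ n) (c m : ℤ) :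
    qbinThetaSum c (n + 1) m = qbinThetaSum c n (m - 1) + T m * qbinThetaSum (c - 2) n m := by
  have hterm (j : ℤ) : m1 j * T (2 * j ^ 2 + c * j) * qbin (T 1) (n + 1) (m - 2 * j) =
      m1 j * T (2 * j ^ 2 + c * j) * qbin (T 1) n (m - 1 - 2 * j) +
        T m * (m1 j * T (2 * j ^ 2 + (c - 2) * j) * qbin (T 1) n (m - 2 * j)) := by
    rw [qbin_succ hn, sub_right_comm]
    linear_combination m1 j * qbin (T 1) n (m - 2 * j) *
      T_mul_T_eq_T_mul_T (2 * j ^ 2 + c * j) (m - 2 * j) m (2 * j ^ 2 + (c - 2) * j) (by ring)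
  unfold qbinThetaSum
  rw [finsum_congr hterm, finsum_add_distrib (finite_support_mul_qbin _ _ _)
    ((finite_support_mul_qbin _ n m).subset (Function.support_mul_subset_right (fun _ => T m) _)),
    mul_finsum]

lemma qbinThetaSum_succ' {n : ℤ} (hn : 0 ≤ n) (c m : ℤ) :
    qbinThetaSum c (n + 1) m = T (n + 1 - m) * qbinThetaSum (c + 2) n (m - 1) +
      qbinThetaSum c n m := by
  have hterm (j : ℤ) : m1 j * T (2 * j ^ 2 + c * j) * qbin (T 1) (n + 1) (m - 2 * j) =
      T (n + 1 - m) * (m1 j * T (2 * j ^ 2 + (c + 2) * j) * qbin (T 1) n (m - 1 - 2 * j)) +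
        m1 j * T (2 * j ^ 2 + c * j) * qbin (T 1) n (m - 2 * j) := by
    rw [qbin_succ' hn, sub_right_comm]
    linear_combination m1 j * qbin (T 1) n (m - 1 - 2 * j) *
      T_mul_T_eq_T_mul_T (2 * j ^ 2 + c * j) (n + 1 - (m - 2 * j)) (n + 1 - m)
        (2 * j ^ 2 + (c + 2) * j) (by ring)
  unfold qbinThetaSum
  rw [finsum_congr hterm, finsum_add_distrib
    ((finite_support_mul_qbin _ n (m - 1)).subset
      (Function.support_mul_subset_right (fun _ => T (n + 1 - m)) _))
    (finite_support_mul_qbin _ _ _), mul_finsum]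

lemma qbinThetaSum_reflect {c n m m' : ℤ} (h : m + m' = n) :
    qbinThetaSum c n m = qbinThetaSum (-c) n m' := by
  unfold qbinThetaSum
  conv_rhs => rw [← finsum_comp_equiv (Equiv.neg ℤ)]
  refine finsum_congr fun j => ?_
  rw [Equiv.neg_apply, m1_neg, qbin_symm n (m' - 2 * -j),
    show n - (m' - 2 * -j) = m - 2 * j by omega]
  ring_nf

lemma qbinThetaSum_two_eq_zero {n m : ℤ} (h : n = 2 * m + 2) : qbinThetaSum 2 n m = 0 := by
  refine finsum_eq_zero_of_comp_equiv_eq_neg ((Equiv.neg ℤ).trans (Equiv.subRight 1)) fun j => ?_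
  rw [Equiv.trans_apply, Equiv.neg_apply, Equiv.subRight_apply, m1_neg_sub_one,
    qbin_symm n (m - 2 * (-j - 1)), show n - (m - 2 * (-j - 1)) = m - 2 * j by omega]
  ring_nf

lemma qbinThetaSum_zero_zero_zero : qbinThetaSum 0 0 0 = 1 := by
  unfold qbinThetaSum
  rw [finsum_eq_single _ 0 fun j hj => ?_]
  · simp [m1, qbin_zero_right]
  rcases hj.lt_or_gt with hj | hj
  · rw [qbin_eq_zero_of_lt (by omega), mul_zero]
  · rw [qbin_eq_zero_of_neg (by omega), mul_zero]

lemma qbinThetaSum_odd_eq_even {m : ℤ} (hm : 0 ≤ m) :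
    qbinThetaSum 0 (2 * m + 1) m = qbinThetaSum 0 (2 * m) m := by
  rw [qbinThetaSum_succ' (by omega), zero_add, qbinThetaSum_two_eq_zero (by ring), mul_zero,
    zero_add]

lemma qbinThetaSum_even_succ {m : ℤ} (hm : 0 ≤ m) :
    qbinThetaSum 0 (2 * m + 2) (m + 1) = (1 + T (2 * m + 1)) * qbinThetaSum 0 (2 * m) m :=
  calc qbinThetaSum 0 (2 * m + 2) (m + 1)
      = T (m + 1) * qbinThetaSum 2 (2 * m + 1) m + qbinThetaSum 0 (2 * m + 1) (m + 1) := by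
        rw [show 2 * m + 2 = 2 * m + 1 + 1 by ring, qbinThetaSum_succ' (by omega),
          add_sub_cancel_right, zero_add, show 2 * m + 1 + 1 - (m + 1) = m + 1 by ring]
    _ = T (m + 1) * (T m * qbinThetaSum 0 (2 * m) m) + qbinThetaSum 0 (2 * m) m := by
        rw [qbinThetaSum_succ (by omega), qbinThetaSum_two_eq_zero (by ring), sub_self,
          qbinThetaSum_reflect (c := 0) (n := 2 * m + 1) (m' := m) (by ring), neg_zero,
          qbinThetaSum_odd_eq_even hm, zero_add]
    _ = (1 + T (2 * m + 1)) * qbinThetaSum 0 (2 * m) m := by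
        rw [← mul_assoc, ← T_add]
        ring_nf

theorem stmt1 (L : ℕ) :
    (∏ k ∈ Finset.Icc 1 L, (1 + T (2 * (k : ℤ) - 1))) =
      (∑ᶠ j : ℤ, m1 j * T (2 * j ^ 2) * qbin (T 1) (2 * L) (L - 2 * j)) ∧
    (∏ k ∈ Finset.Icc 1 L, (1 + T (2 * (k : ℤ) - 1))) =
      ∑ᶠ j : ℤ, m1 j * T (2 * j ^ 2) * qbin (T 1) (2 * L + 1) (L - 2 * j) := by
  have hprod (L : ℕ) :
      ∏ k ∈ Finset.Icc 1 L, (1 + T (2 * (k : ℤ) - 1)) = qbinThetaSum 0 (2 * L) L := by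
    induction L with
    | zero => simp [qbinThetaSum_zero_zero_zero]
    | succ L ih =>
      rw [prod_Icc_succ_top (by omega), ih, mul_comm]
      push_cast
      rw [mul_add_one, qbinThetaSum_even_succ (by positivity)]
      ring_nf
  have hodd := qbinThetaSum_odd_eq_even (Int.natCast_nonneg L)
  simp only [qbinThetaSum, zero_mul, add_zero] at hprod hodd
  exact ⟨hprod L, (hprod L).trans hodd.symm⟩
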